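/- Let G be a finite connected cubic graph and let (I1,I2) be a pair of disjoint independent sets satisfying Conditions (I) and (II). Suppose the cycle setup holds for C' and all the black vertices vi of C' lie in I1. Let x be a vertex of G not on C' and let d(x,C') denote the minimum distance in G from x to a vertex of C'. If d(x,C') ≤ 2 then x ∈ I1 ∪ I2; more precisely, if d(x,C') = 1 then x ∈ I2, and if d(x,C') = 2 then x ∈ I1. -/

import Mathlib

open SimpleGraph

variable {V : Type*}

/-- A finset `I` is an independent set of `G`. -/
def FinsetIndep (G : SimpleGraph V) (I : Finset V) : Prop :=
  ∀ u ∈ I, ∀ v ∈ I, ¬ G.Adj u v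

/-- Condition (I): `|I1| + |I2|` is maximum among all pairs of disjoint
independent sets of `G`. -/
def CondI (G : SimpleGraph V) (I1 I2 : Finset V) : Prop :=
  ∀ J1 J2 : Finset V, Disjoint J1 J2 → FinsetIndep G J1 → FinsetIndep G J2 →
    J1.card + J2.card ≤ I1.card + I2.card

/-- The set of red vertices: the vertices outside `I1 ∪ I2`. -/
def redSet (I1 I2 : Finset V) : Set V := {v | v ∉ I1 ∧ v ∉ I2}

/-- The number of connected components of the subgraph of `G` induced on the
red vertices. -/
noncomputable def numRedComp (G : SimpleGraph V) (I1 I2 : Finset V) : ℕ :=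
  Nat.card ((G.induce (redSet I1 I2)).ConnectedComponent)

/-- Condition (II): subject to Condition (I), the number of connected
components of the subgraph induced on the red vertices is minimum. -/
def CondII (G : SimpleGraph V) (I1 I2 : Finset V) : Prop :=
  ∀ J1 J2 : Finset V, Disjoint J1 J2 → FinsetIndep G J1 → FinsetIndep G J2 →
    CondI G J1 J2 → numRedComp G I1 I2 ≤ numRedComp G J1 J2

/-- The auxiliary graph `H` on the red vertices: two distinct red vertices are
adjacent iff their distance in `G` is at most 2. -/
def Hgraph (G : SimpleGraph V) (I1 I2 : Finset V) : SimpleGraph (redSet I1 I2) where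
  Adj x y := x ≠ y ∧ G.edist (x : V) (y : V) ≤ 2
  symm := ⟨by
    rintro x y ⟨hne, hd⟩
    exact ⟨hne.symm, by rwa [SimpleGraph.edist_comm]⟩⟩
  loopless := ⟨by rintro x ⟨hne, -⟩; exact hne rfl⟩

/-- The number of black vertices on the cycle `C'`: `k` in the no-red-`P2`
case and `k - 1` in the red-`P2` case. -/
def blackCount (k : ℕ) (p2 : Bool) : ℕ := if p2 then k - 1 else k

/-- The cycle setup: `u 0, …, u (k-1)` are red vertices forming the vertex set
of a connected component of `H`, and `C'` is a cycle of `G` which is either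
`u 0, v 0, u 1, v 1, …, u (k-1), v (k-1), u 0` (no-red-`P2` case, `p2 = false`,
`2k` distinct vertices), or
`u 0, v 0, u 1, v 1, …, v (k-2), u (k-1), u 0` (red-`P2` case, `p2 = true`,
`2k - 1` distinct vertices, with `u (k-1)` adjacent to `u 0`). -/
def CycleSetup (G : SimpleGraph V) (I1 I2 : Finset V) (k : ℕ)
    (u v : ℕ → V) (p2 : Bool) : Prop :=
  3 ≤ k ∧
  (∀ i < k, u i ∈ redSet I1 I2) ∧
  (∀ i < blackCount k p2, v i ∈ I1 ∨ v i ∈ I2) ∧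
  (∀ i < k, ∀ j < k, u i = u j → i = j) ∧
  (∀ i < blackCount k p2, ∀ j < blackCount k p2, v i = v j → i = j) ∧
  (∀ i < k, ∀ j < blackCount k p2, u i ≠ v j) ∧
  (∀ i < blackCount k p2, G.Adj (u i) (v i)) ∧
  (∀ i < blackCount k p2, G.Adj (v i) (u ((i + 1) % k))) ∧
  (p2 = true → G.Adj (u (k - 1)) (u 0)) ∧
  (∃ c : (Hgraph G I1 I2).ConnectedComponent,
      c.supp = {x : redSet I1 I2 | ∃ i < k, (x : V) = u i})

/-- The vertex set of the cycle `C'`. -/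
def cycleVerts (k : ℕ) (u v : ℕ → V) (p2 : Bool) : Set V :=
  {x | (∃ i < k, x = u i) ∨ (∃ i < blackCount k p2, x = v i)}

/-!
Maximality (Condition (I)) gives every red vertex a neighbour in `I2`. The two cycle neighbours
of `u j` are black vertices of `I1` or the other end of the red `P2`, so its third neighbour is
in `I2`: the red and `I1` neighbours of every `u j` lie on `C'`. As the `u j` form a whole
component of `H`, no other red vertex is within distance 2 of them. A vertex `x` adjacent to
`C'` therefore lies in `I2`. If `d(x, C') = 2` along `x w z`, then `w ∈ I2`, so `x ∉ I2`, and a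
red `x` forces `z = v i`. Then trading all `v j` for the `u j` in `I1` and `w` for `v i` in
`I2` keeps `|I1| + |I2|` but lowers the number of red components, against Condition (II).
-/

namespace SimpleGraph

variable {G : SimpleGraph V}

lemma eq_or_eq_or_eq_of_degree_eq_three {w a b c z : V} [Fintype (G.neighborSet w)]
    (hw : G.degree w = 3) (ha : G.Adj w a) (hb : G.Adj w b) (hc : G.Adj w c)
    (hab : a ≠ b) (hac : a ≠ c) (hbc : b ≠ c) (hz : G.Adj w z) : z = a ∨ z = b ∨ z = c := by
  classical
  have hsub : {a, b, c} ⊆ G.neighborFinset w := by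
    simp [Finset.insert_subset_iff, ha, hb, hc]
  have hcard : (G.neighborFinset w).card ≤ ({a, b, c} : Finset V).card := by
    rw [card_neighborFinset_eq_degree, hw, Finset.card_eq_three.mpr ⟨a, b, c, hab, hac, hbc, rfl⟩]
  have hz' : z ∈ ({a, b, c} : Finset V) := by
    rw [Finset.eq_of_subset_of_card_le hsub hcard]
    simpa using hz
  simpa using hz'

lemma exists_adj_adj_of_edist_le_two {x z : V} (h : G.edist x z ≤ 2) (hne : x ≠ z)
    (hxz : ¬ G.Adj x z) : ∃ w, G.Adj x w ∧ G.Adj w z := by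
  have : ¬ 2 < G.edist x z := not_lt.mpr h
  rw [two_lt_edist_iff] at this
  obtain ⟨w, hw⟩ := Set.nonempty_iff_ne_empty.mpr fun h => this ⟨hne, hxz, h⟩
  exact ⟨w, (G.mem_commonNeighbors.mp hw).1, ((G.mem_commonNeighbors.mp hw).2).symm⟩

lemma Reachable.exists_induce_of_closed {s t : Set V}
    (hcl : ∀ a ∈ s, ∀ b ∈ t, G.Adj a b → b ∈ s) {a b : t} (h : (G.induce t).Reachable a b)
    (ha : (a : V) ∈ s) : ∃ hb : (b : V) ∈ s, (G.induce s).Reachable ⟨a, ha⟩ ⟨b, hb⟩ := by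
  obtain ⟨p⟩ := h
  induction p with
  | nil => exact ⟨ha, .rfl⟩
  | @cons a c b hac _ ih =>
    have hc := hcl a ha c c.2 hac
    obtain ⟨hb, hcb⟩ := ih hc
    have hac' : (G.induce s).Adj ⟨a, ha⟩ ⟨c, hc⟩ := hac
    exact ⟨hb, hac'.reachable.trans hcb⟩

lemma card_connectedComponent_lt_of_rel {W X : Type*} [Finite X] {A : SimpleGraph W}
    {B : SimpleGraph X} (ρ : W → X → Prop) (hcover : ∀ a, ∃ t b, A.Reachable a t ∧ ρ t b)
    (hreach : ∀ t t' b b', ρ t b → ρ t' b' → B.Reachable b b' → A.Reachable t t')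
    (b₀ : X) (hb₀ : ∀ t b, ρ t b → ¬ B.Reachable b b₀) :
    Nat.card A.ConnectedComponent < Nat.card B.ConnectedComponent := by
  classical
  choose t b hat hρ using hcover
  let f (c : A.ConnectedComponent) : B.ConnectedComponent :=
    B.connectedComponentMk (b c.out)
  have hf : Function.Injective f := fun c c' h => by
    rw [← c.out_eq, ← c'.out_eq]
    refine ConnectedComponent.sound ?_
    have := hreach _ _ _ _ (hρ c.out) (hρ c'.out) (ConnectedComponent.exact h)
    exact (hat c.out).trans (this.trans (hat c'.out).symm)
  have hb : B.connectedComponentMk b₀ ∉ Set.range f := by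
    rintro ⟨c, hc⟩
    exact hb₀ _ _ (hρ c.out) (ConnectedComponent.exact hc)
  have := Finite.of_injective f hf
  have := Fintype.ofFinite A.ConnectedComponent
  have := Fintype.ofFinite B.ConnectedComponent
  simpa only [Nat.card_eq_fintype_card] using Fintype.card_lt_of_injective_of_notMem f hf hb

end SimpleGraph

lemma ENat.exists_le_of_biInf_le {ι : Type*} {s : Set ι} {f : ι → ℕ∞} {n : ℕ}
    (h : ⨅ i ∈ s, f i ≤ n) : ∃ i ∈ s, f i ≤ n := by
  have : ⨅ i ∈ s, f i < n + 1 := h.trans_lt (by exact_mod_cast n.lt_succ_self)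
  simp only [iInf_lt_iff] at this
  obtain ⟨i, hi, hlt⟩ := this
  exact ⟨i, hi, Order.le_of_lt_add_one hlt⟩

section Independence

variable {G : SimpleGraph V} {I1 I2 : Finset V}

lemma FinsetIndep.subset {J : Finset V} (hI : FinsetIndep G I1) (hJ : J ⊆ I1) :
    FinsetIndep G J :=
  fun a ha b hb => hI a (hJ ha) b (hJ hb)

lemma FinsetIndep.insert [DecidableEq V] (hI : FinsetIndep G I1) {r : V}
    (hr : ∀ z ∈ I1, ¬ G.Adj r z) : FinsetIndep G (insert r I1) := by
  intro a ha b hb hab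
  rcases Finset.mem_insert.mp ha with rfl | ha' <;>
    rcases Finset.mem_insert.mp hb with rfl | hb'
  · exact G.loopless.irrefl _ hab
  · exact hr b hb' hab
  · exact hr a ha' hab.symm
  · exact hI a ha' b hb' hab

lemma CondI.exists_adj_mem_snd (hmax : CondI G I1 I2) (hdisj : Disjoint I1 I2)
    (hI1 : FinsetIndep G I1) (hI2 : FinsetIndep G I2) {r : V} (h1 : r ∉ I1) (h2 : r ∉ I2) :
    ∃ z ∈ I2, G.Adj r z := by
  classical
  by_contra! hr
  have := hmax I1 (insert r I2) (Finset.disjoint_insert_right.mpr ⟨h1, hdisj⟩) hI1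
    (hI2.insert hr)
  rw [Finset.card_insert_of_notMem h2] at this
  omega

end Independence

lemma blackCount_le (k : ℕ) (p2 : Bool) : blackCount k p2 ≤ k := by
  cases p2 <;> simp [blackCount]

lemma pred_le_blackCount (k : ℕ) (p2 : Bool) : k - 1 ≤ blackCount k p2 := by
  cases p2 <;> simp [blackCount]

def offCycleRed (I1 I2 : Finset V) (k : ℕ) (u v : ℕ → V) (p2 : Bool) : Set V :=
  redSet I1 I2 \ cycleVerts k u v p2

def swapFst [DecidableEq V] (I1 : Finset V) (k : ℕ) (u v : ℕ → V) (p2 : Bool) (l₀ : ℕ) :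
    Finset V :=
  (I1 \ (Finset.range (blackCount k p2)).image v) ∪
    ((Finset.range k).filter fun l => p2 = true → l ≠ l₀).image u

lemma mem_swapFst [DecidableEq V] {I1 : Finset V} {k : ℕ} {u v : ℕ → V} {p2 : Bool} {l₀ : ℕ}
    {w : V} : w ∈ swapFst I1 k u v p2 l₀ ↔
      (w ∈ I1 ∧ ∀ l < blackCount k p2, v l ≠ w) ∨ ∃ l < k, (p2 = true → l ≠ l₀) ∧ u l = w := by
  simp [swapFst, and_assoc]

structure CycleConfig [Fintype V] (G : SimpleGraph V) [DecidableRel G.Adj]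
    (I1 I2 : Finset V) (k : ℕ) (u v : ℕ → V) (p2 : Bool) : Prop where
  degree_eq_three : ∀ w, G.degree w = 3
  disjoint : Disjoint I1 I2
  indep_fst : FinsetIndep G I1
  indep_snd : FinsetIndep G I2
  condI : CondI G I1 I2
  condII : CondII G I1 I2
  setup : CycleSetup G I1 I2 k u v p2
  black_mem_fst : ∀ i < blackCount k p2, v i ∈ I1

namespace CycleConfig

variable [Fintype V] {G : SimpleGraph V} [DecidableRel G.Adj] {I1 I2 : Finset V} {k : ℕ}
  {u v : ℕ → V} {p2 : Bool} (S : CycleConfig G I1 I2 k u v p2)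
include S

lemma three_le : 3 ≤ k := S.setup.1

lemma u_mem_redSet {i : ℕ} (hi : i < k) : u i ∈ redSet I1 I2 := S.setup.2.1 i hi

lemma u_injective {i j : ℕ} (hi : i < k) (hj : j < k) (h : u i = u j) : i = j :=
  S.setup.2.2.2.1 i hi j hj h

lemma v_injective {i j : ℕ} (hi : i < blackCount k p2) (hj : j < blackCount k p2)
    (h : v i = v j) : i = j :=
  S.setup.2.2.2.2.1 i hi j hj h

lemma u_ne_v {i j : ℕ} (hi : i < k) (hj : j < blackCount k p2) : u i ≠ v j :=
  S.setup.2.2.2.2.2.1 i hi j hj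

lemma adj_u_v {i : ℕ} (hi : i < blackCount k p2) : G.Adj (u i) (v i) :=
  S.setup.2.2.2.2.2.2.1 i hi

lemma adj_v_u {i : ℕ} (hi : i < blackCount k p2) : G.Adj (v i) (u ((i + 1) % k)) :=
  S.setup.2.2.2.2.2.2.2.1 i hi

lemma adj_u_last_u_zero (hp : p2 = true) : G.Adj (u (k - 1)) (u 0) :=
  S.setup.2.2.2.2.2.2.2.2.1 hp

lemma v_not_mem_snd {i : ℕ} (hi : i < blackCount k p2) : v i ∉ I2 :=
  Finset.disjoint_left.mp S.disjoint (S.black_mem_fst i hi)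

lemma adj_v_u_succ {i : ℕ} (hi : i + 1 < k) (hib : i < blackCount k p2) :
    G.Adj (v i) (u (i + 1)) := by
  simpa [Nat.mod_eq_of_lt hi] using S.adj_v_u hib

lemma exists_eq_u_of_edist_le_two {b : V} (hb : b ∈ redSet I1 I2) {j : ℕ} (hj : j < k)
    (hd : G.edist b (u j) ≤ 2) : ∃ l < k, b = u l := by
  obtain ⟨c, hc⟩ := S.setup.2.2.2.2.2.2.2.2.2
  have huj : (⟨u j, S.u_mem_redSet hj⟩ : redSet I1 I2) ∈ c.supp := by
    rw [hc]; exact ⟨j, hj, rfl⟩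
  by_cases hbu : b = u j
  · exact ⟨j, hj, hbu⟩
  have hadj : (Hgraph G I1 I2).Adj ⟨b, hb⟩ ⟨u j, S.u_mem_redSet hj⟩ :=
    ⟨fun h => hbu (congrArg Subtype.val h), hd⟩
  have hbc : (⟨b, hb⟩ : redSet I1 I2) ∈ c.supp := by
    rw [ConnectedComponent.mem_supp_iff] at huj ⊢
    rw [← huj]
    exact ConnectedComponent.connectedComponentMk_eq_of_adj hadj
  rw [hc] at hbc
  exact hbc

lemma exists_two_cycle_nbrs {j : ℕ} (hj : j < k) :
    ∃ a b, a ≠ b ∧ G.Adj (u j) a ∧ G.Adj (u j) b ∧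
      ((∃ l < blackCount k p2, a = v l) ∨ (p2 = true ∧ (a = u 0 ∨ a = u (k - 1)))) ∧
      ((∃ l < blackCount k p2, b = v l) ∨ (p2 = true ∧ (b = u 0 ∨ b = u (k - 1)))) := by
  have hk := S.three_le
  have hbc := pred_le_blackCount k p2
  rcases Nat.eq_zero_or_pos j with rfl | hj0
  · cases p2 with
    | true =>
      exact ⟨v 0, u (k - 1), (S.u_ne_v (by omega) (by omega)).symm, S.adj_u_v (by omega),
        (S.adj_u_last_u_zero rfl).symm, Or.inl ⟨0, by omega, rfl⟩, Or.inr ⟨rfl, Or.inr rfl⟩⟩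
    | false =>
      have hbk : blackCount k false = k := rfl
      have hlast : G.Adj (v (k - 1)) (u 0) := by
        simpa [Nat.sub_add_cancel (by omega : 1 ≤ k)] using S.adj_v_u (i := k - 1) (by omega)
      refine ⟨v 0, v (k - 1), fun h => ?_, S.adj_u_v (by omega), hlast.symm,
        Or.inl ⟨0, by omega, rfl⟩, Or.inl ⟨k - 1, by omega, rfl⟩⟩
      have := S.v_injective (by omega) (by omega) h
      omega
  · have hback : G.Adj (u j) (v (j - 1)) := by
      simpa [Nat.sub_add_cancel hj0] using (S.adj_v_u_succ (i := j - 1) (by omega) (by omega)).symm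
    by_cases hjb : j < blackCount k p2
    · refine ⟨v j, v (j - 1), fun h => ?_, S.adj_u_v hjb, hback,
        Or.inl ⟨j, hjb, rfl⟩, Or.inl ⟨j - 1, by omega, rfl⟩⟩
      have := S.v_injective hjb (by omega) h
      omega
    · have hp : p2 = true := by
        cases p2
        · exact absurd hj hjb
        · rfl
      have hjk : j = k - 1 := by simp [blackCount, hp] at hjb; omega
      refine ⟨u 0, v (j - 1), S.u_ne_v (by omega) (by omega), ?_, hback,
        Or.inr ⟨hp, Or.inl rfl⟩, Or.inl ⟨j - 1, by omega, rfl⟩⟩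
      rw [hjk]
      exact S.adj_u_last_u_zero hp

lemma adj_u_cases {j : ℕ} (hj : j < k) {z : V} (hz : G.Adj (u j) z) :
    z ∈ I2 ∨ (∃ l < blackCount k p2, z = v l) ∨ (p2 = true ∧ (z = u 0 ∨ z = u (k - 1))) := by
  have hk := S.three_le
  obtain ⟨a, b, hab, ha, hb, hPa, hPb⟩ := S.exists_two_cycle_nbrs hj
  obtain ⟨c, hc, hjc⟩ := S.condI.exists_adj_mem_snd S.disjoint S.indep_fst S.indep_snd
    (S.u_mem_redSet hj).1 (S.u_mem_redSet hj).2
  have hnot : ∀ w, ((∃ l < blackCount k p2, w = v l) ∨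
      (p2 = true ∧ (w = u 0 ∨ w = u (k - 1)))) → w ∉ I2 := by
    rintro w (⟨l, hl, rfl⟩ | ⟨-, rfl | rfl⟩)
    · exact S.v_not_mem_snd hl
    · exact (S.u_mem_redSet (by omega)).2
    · exact (S.u_mem_redSet (by omega)).2
  rcases eq_or_eq_or_eq_of_degree_eq_three (S.degree_eq_three _) ha hb hjc hab
    (fun h => hnot a hPa (h ▸ hc)) (fun h => hnot b hPb (h ▸ hc)) hz with rfl | rfl | rfl
  · exact Or.inr hPa
  · exact Or.inr hPb
  · exact Or.inl hc

lemma exists_eq_v_of_adj_u_of_mem_fst {j : ℕ} (hj : j < k) {z : V} (hz : G.Adj (u j) z)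
    (h1 : z ∈ I1) : ∃ l < blackCount k p2, z = v l := by
  have hk := S.three_le
  rcases S.adj_u_cases hj hz with h2 | h | ⟨-, rfl | rfl⟩
  · exact absurd h2 (Finset.disjoint_left.mp S.disjoint h1)
  · exact h
  · exact absurd h1 (S.u_mem_redSet (by omega)).1
  · exact absurd h1 (S.u_mem_redSet (by omega)).1

lemma adj_u_of_mem_redSet {j : ℕ} (hj : j < k) {z : V} (hz : G.Adj (u j) z)
    (hr : z ∈ redSet I1 I2) : p2 = true ∧ (z = u 0 ∨ z = u (k - 1)) := by
  rcases S.adj_u_cases hj hz with h2 | ⟨l, hl, rfl⟩ | h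
  · exact absurd h2 hr.2
  · exact absurd (S.black_mem_fst l hl) hr.1
  · exact h

lemma adj_u_u {a b : ℕ} (ha : a < k) (hb : b < k) (hab : G.Adj (u a) (u b)) :
    p2 = true ∧ (a = 0 ∨ a = k - 1) ∧ (b = 0 ∨ b = k - 1) := by
  have hk := S.three_le
  have is_end (i j : ℕ) (hi : i < k) (hj : j < k) (h : G.Adj (u j) (u i)) :
      p2 = true ∧ (i = 0 ∨ i = k - 1) := by
    obtain ⟨hp, h0 | hl⟩ := S.adj_u_of_mem_redSet hj h (S.u_mem_redSet hi)
    · exact ⟨hp, Or.inl (S.u_injective hi (by omega) h0)⟩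
    · exact ⟨hp, Or.inr (S.u_injective hi (by omega) hl)⟩
  exact ⟨(is_end b a hb ha hab).1, (is_end a b ha hb hab.symm).2, (is_end b a hb ha hab).2⟩

lemma mem_offCycleRed_of_adj {a b : V} (ha : a ∈ offCycleRed I1 I2 k u v p2)
    (hb : b ∈ redSet I1 I2) (hab : G.Adj a b) : b ∈ offCycleRed I1 I2 k u v p2 := by
  have hk := S.three_le
  refine ⟨hb, ?_⟩
  rintro (⟨l, hl, rfl⟩ | ⟨l, hl, rfl⟩)
  · obtain ⟨-, rfl | rfl⟩ := S.adj_u_of_mem_redSet hl hab.symm ha.1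
    · exact ha.2 (Or.inl ⟨0, by omega, rfl⟩)
    · exact ha.2 (Or.inl ⟨k - 1, by omega, rfl⟩)
  · exact hb.1 (S.black_mem_fst l hl)

lemma reachable_induce_offCycleRed {a b : redSet I1 I2}
    (h : (G.induce (redSet I1 I2)).Reachable a b) (ha : (a : V) ∈ offCycleRed I1 I2 k u v p2) :
    ∃ hb : (b : V) ∈ offCycleRed I1 I2 k u v p2,
      (G.induce (offCycleRed I1 I2 k u v p2)).Reachable ⟨a, ha⟩ ⟨b, hb⟩ :=
  h.exists_induce_of_closed (fun _ ha _ hb hab => S.mem_offCycleRed_of_adj ha hb hab) ha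

lemma not_reachable_offCycleRed_u {a b : redSet I1 I2}
    (ha : (a : V) ∈ offCycleRed I1 I2 k u v p2) {l : ℕ} (hl : l < k) (hb : (b : V) = u l) :
    ¬ (G.induce (redSet I1 I2)).Reachable a b := fun h =>
  (S.reachable_induce_offCycleRed h ha).1.2 (Or.inl ⟨l, hl, hb⟩)

/-- Only `u 0` and `u (k - 1)` can share a red component, and then `blackCount k p2 = k - 1`. -/
lemma eq_of_reachable_u_u {a b : ℕ} (ha : a < blackCount k p2) (hb : b < blackCount k p2)
    {x y : redSet I1 I2} (hx : (x : V) = u a) (hy : (y : V) = u b)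
    (h : (G.induce (redSet I1 I2)).Reachable x y) : a = b := by
  have hk := S.three_le
  have hbk := blackCount_le k p2
  let s : Set V := {w | w = u a ∨ (p2 = true ∧ (a = 0 ∨ a = k - 1) ∧ (w = u 0 ∨ w = u (k - 1)))}
  have hcl : ∀ w ∈ s, ∀ w' ∈ redSet I1 I2, G.Adj w w' → w' ∈ s := by
    rintro w (rfl | ⟨hp, hend, rfl | rfl⟩) w' hw' hadj
    · obtain ⟨hp, hw'⟩ := S.adj_u_of_mem_redSet (by omega) hadj hw'
      refine Or.inr ⟨hp, ?_, hw'⟩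
      rcases hw' with rfl | rfl
      · exact (S.adj_u_u (by omega) (by omega) hadj).2.1
      · exact (S.adj_u_u (by omega) (by omega) hadj).2.1
    · exact Or.inr ⟨hp, hend, (S.adj_u_of_mem_redSet (by omega) hadj hw').2⟩
    · exact Or.inr ⟨hp, hend, (S.adj_u_of_mem_redSet (by omega) hadj hw').2⟩
  obtain ⟨hys, -⟩ := h.exists_induce_of_closed hcl (show (x : V) ∈ s from Or.inl hx)
  rw [hy] at hys
  rcases hys with h | ⟨hp, hend, h | h⟩
  · exact (S.u_injective (by omega) (by omega) h).symm
  all_goals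
    have hbc : blackCount k p2 = k - 1 := by simp [blackCount, hp]
    have := S.u_injective (by omega) (by omega) h
    omega

section Swap

variable [DecidableEq V]

lemma card_swapFst {l₀ : ℕ} (hl₀ : l₀ < k) : (swapFst I1 k u v p2 l₀).card = I1.card := by
  have hsub : (Finset.range (blackCount k p2)).image v ⊆ I1 := by
    simpa [Finset.image_subset_iff] using S.black_mem_fst
  have hv : ((Finset.range (blackCount k p2)).image v).card = blackCount k p2 := by
    rw [Finset.card_image_of_injOn fun a ha b hb => S.v_injective (by simpa using ha)
      (by simpa using hb), Finset.card_range]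
  have hu : (((Finset.range k).filter fun l => p2 = true → l ≠ l₀).image u).card =
      blackCount k p2 := by
    rw [Finset.card_image_of_injOn fun a ha b hb => S.u_injective
      (Finset.mem_range.mp (Finset.mem_filter.mp ha).1)
      (Finset.mem_range.mp (Finset.mem_filter.mp hb).1)]
    cases p2
    · simp [blackCount]
    · simp [blackCount, Finset.filter_ne', Finset.card_erase_of_mem (Finset.mem_range.mpr hl₀)]
  have hdisj : Disjoint (I1 \ (Finset.range (blackCount k p2)).image v)
      (((Finset.range k).filter fun l => p2 = true → l ≠ l₀).image u) := by
    simp only [Finset.disjoint_left, Finset.mem_sdiff, Finset.mem_image, Finset.mem_filter,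
      Finset.mem_range]
    rintro _ ⟨h1, -⟩ ⟨l, ⟨hl, -⟩, rfl⟩
    exact (S.u_mem_redSet hl).1 h1
  have := Finset.card_le_card hsub
  rw [swapFst, Finset.card_union_of_disjoint hdisj, Finset.card_sdiff_of_subset hsub, hv, hu]
  omega

lemma indep_swapFst {l₀ : ℕ} (hl₀ : l₀ = 0 ∨ l₀ = k - 1) :
    FinsetIndep G (swapFst I1 k u v p2 l₀) := by
  intro a ha b hb hab
  rcases mem_swapFst.mp ha with ⟨ha1, hav⟩ | ⟨la, hla, hla₀, rfl⟩ <;>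
    rcases mem_swapFst.mp hb with ⟨hb1, hbv⟩ | ⟨lb, hlb, hlb₀, rfl⟩
  · exact S.indep_fst a ha1 b hb1 hab
  · obtain ⟨l, hl, rfl⟩ := S.exists_eq_v_of_adj_u_of_mem_fst hlb hab.symm ha1
    exact hav l hl rfl
  · obtain ⟨l, hl, rfl⟩ := S.exists_eq_v_of_adj_u_of_mem_fst hla hab hb1
    exact hbv l hl rfl
  · obtain ⟨hp, hla', hlb'⟩ := S.adj_u_u hla hlb hab
    have hla_ne := hla₀ hp
    have hlb_ne := hlb₀ hp
    have : la ≠ lb := by rintro rfl; exact G.loopless.irrefl _ hab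
    omega

lemma card_insert_v_erase {i : ℕ} (hi : i < blackCount k p2) {y : V} (hy : y ∈ I2) :
    (insert (v i) (I2.erase y)).card = I2.card := by
  rw [Finset.card_insert_of_notMem fun h => S.v_not_mem_snd hi (Finset.mem_of_mem_erase h),
    Finset.card_erase_add_one hy]

lemma indep_insert_v_erase {i : ℕ} (hi : i < blackCount k p2) {y : V} (hy : y ∈ I2)
    (hyv : G.Adj y (v i)) : FinsetIndep G (insert (v i) (I2.erase y)) := by
  have hk := S.three_le
  have hbk := blackCount_le k p2
  have hsucc : (i + 1) % k ≠ i := by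
    rcases Nat.lt_or_ge (i + 1) k with h | h
    · rw [Nat.mod_eq_of_lt h]; omega
    · rw [show i + 1 = k by omega, Nat.mod_self]; omega
  have hi' : (i + 1) % k < k := Nat.mod_lt _ (by omega)
  have hu_ne_y {l : ℕ} (hl : l < k) : u l ≠ y := fun h => (S.u_mem_redSet hl).2 (h ▸ hy)
  refine (S.indep_snd.subset (Finset.erase_subset _ _)).insert fun z hz hvz => ?_
  rcases eq_or_eq_or_eq_of_degree_eq_three (S.degree_eq_three _) (S.adj_u_v hi).symm
    (S.adj_v_u hi) hyv.symm (fun h => hsucc (S.u_injective hi' (by omega) h.symm))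
    (hu_ne_y (by omega)) (hu_ne_y hi') hvz with rfl | rfl | rfl
  · exact (S.u_mem_redSet (by omega)).2 (Finset.mem_of_mem_erase hz)
  · exact (S.u_mem_redSet hi').2 (Finset.mem_of_mem_erase hz)
  · exact Finset.notMem_erase _ _ hz

lemma disjoint_swapFst_insert_v_erase {l₀ i : ℕ} (hi : i < blackCount k p2) (y : V) :
    Disjoint (swapFst I1 k u v p2 l₀) (insert (v i) (I2.erase y)) := by
  rw [Finset.disjoint_left]
  intro w hw1 hw2
  rcases Finset.mem_insert.mp hw2 with rfl | hw2
  · rcases mem_swapFst.mp hw1 with ⟨-, hv⟩ | ⟨l, hl, -, hl'⟩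
    · exact hv i hi rfl
    · exact S.u_ne_v hl hi hl'
  · rcases mem_swapFst.mp hw1 with ⟨h1, -⟩ | ⟨l, hl, -, rfl⟩
    · exact Finset.disjoint_left.mp S.disjoint h1 (Finset.mem_of_mem_erase hw2)
    · exact (S.u_mem_redSet hl).2 (Finset.mem_of_mem_erase hw2)

lemma mem_redSet_swap_cases {l₀ i : ℕ} {y w : V}
    (hw : w ∈ redSet (swapFst I1 k u v p2 l₀) (insert (v i) (I2.erase y))) :
    w ∈ offCycleRed I1 I2 k u v p2 ∨ w = y ∨ (∃ j < blackCount k p2, j ≠ i ∧ w = v j) ∨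
      (p2 = true ∧ w = u l₀) := by
  obtain ⟨hw1, hw2⟩ := hw
  rw [mem_swapFst, not_or] at hw1
  rw [Finset.mem_insert, Finset.mem_erase, not_or] at hw2
  by_cases h2 : w ∈ I2
  · exact Or.inr (Or.inl (by tauto))
  by_cases h1 : w ∈ I1
  · obtain ⟨j, hj, rfl⟩ : ∃ j < blackCount k p2, v j = w := by
      by_contra! h
      exact hw1.1 ⟨h1, h⟩
    exact Or.inr (Or.inr (Or.inl ⟨j, hj, fun h => hw2.1 (by rw [h]), rfl⟩))
  rcases em (w ∈ cycleVerts k u v p2) with (⟨l, hl, rfl⟩ | ⟨l, hl, rfl⟩) | hc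
  · have : p2 = true ∧ l = l₀ := by
      by_contra! h
      exact hw1.2 ⟨l, hl, h, rfl⟩
    exact Or.inr (Or.inr (Or.inr ⟨this.1, by rw [this.2]⟩))
  · exact absurd (S.black_mem_fst l hl) h1
  · exact Or.inl ⟨⟨h1, h2⟩, hc⟩

lemma mem_redSet_swap_of_mem_offCycleRed {l₀ i : ℕ} (hi : i < blackCount k p2) {y w : V}
    (hw : w ∈ offCycleRed I1 I2 k u v p2) :
    w ∈ redSet (swapFst I1 k u v p2 l₀) (insert (v i) (I2.erase y)) := by
  obtain ⟨⟨h1, h2⟩, hc⟩ := hw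
  refine ⟨fun h => ?_, fun h => ?_⟩
  · rcases mem_swapFst.mp h with ⟨h1', -⟩ | ⟨l, hl, -, rfl⟩
    · exact h1 h1'
    · exact hc (Or.inl ⟨l, hl, rfl⟩)
  · rcases Finset.mem_insert.mp h with rfl | h
    · exact h1 (S.black_mem_fst i hi)
    · exact h2 (Finset.mem_of_mem_erase h)

lemma v_mem_redSet_swap {l₀ i j : ℕ} (hj : j < blackCount k p2) (hi : i < blackCount k p2)
    (hji : j ≠ i) (y : V) :
    v j ∈ redSet (swapFst I1 k u v p2 l₀) (insert (v i) (I2.erase y)) := by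
  refine ⟨fun h => ?_, fun h => ?_⟩
  · rcases mem_swapFst.mp h with ⟨-, hv⟩ | ⟨l, hl, -, hl'⟩
    · exact hv j hj rfl
    · exact S.u_ne_v hl hj hl'
  · rcases Finset.mem_insert.mp h with h | h
    · exact hji (S.v_injective hj hi h)
    · exact S.v_not_mem_snd hj (Finset.mem_of_mem_erase h)

/-- Every red component after the swap either contains an off-cycle red vertex, whose old
component it determines, or contains some `v j` with `j ≠ i`, which is sent to the old
component `{u j}`; the old component of `u i` is missed. -/
lemma numRedComp_swap_lt {x y : V} (hx : x ∈ offCycleRed I1 I2 k u v p2) (hxy : G.Adj x y)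
    {i : ℕ} (hi : i < blackCount k p2) {l₀ j₀ : ℕ} (hj₀ : j₀ < blackCount k p2) (hj₀i : j₀ ≠ i)
    (hadj₀ : G.Adj (u l₀) (v j₀)) :
    numRedComp G (swapFst I1 k u v p2 l₀) (insert (v i) (I2.erase y)) <
      numRedComp G I1 I2 := by
  have hbk := blackCount_le k p2
  have hR := fun w (hw : w ∈ offCycleRed I1 I2 k u v p2) =>
    S.mem_redSet_swap_of_mem_offCycleRed (l₀ := l₀) hi (y := y) hw
  refine card_connectedComponent_lt_of_rel
    (fun t b => ((t : V) ∈ offCycleRed I1 I2 k u v p2 ∧ (b : V) = t) ∨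
      ∃ j < blackCount k p2, j ≠ i ∧ (t : V) = v j ∧ (b : V) = u j)
    (fun t => ?_) (fun t t' b b' hρ hρ' h => ?_) ⟨u i, S.u_mem_redSet (by omega)⟩ ?_
  · rcases S.mem_redSet_swap_cases t.2 with ht | ht | ⟨j, hj, hji, ht⟩ | ⟨-, ht⟩
    · exact ⟨t, ⟨t, ht.1⟩, .rfl, Or.inl ⟨ht, rfl⟩⟩
    · have hadj : (G.induce _).Adj t ⟨x, hR x hx⟩ := by
        change G.Adj (t : V) x
        rw [ht]
        exact hxy.symm
      exact ⟨_, ⟨x, hx.1⟩, hadj.reachable, Or.inl ⟨hx, rfl⟩⟩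
    · exact ⟨t, ⟨u j, S.u_mem_redSet (by omega)⟩, .rfl, Or.inr ⟨j, hj, hji, ht, rfl⟩⟩
    · have hadj : (G.induce _).Adj t ⟨v j₀, S.v_mem_redSet_swap hj₀ hi hj₀i y⟩ := by
        change G.Adj (t : V) (v j₀)
        rw [ht]
        exact hadj₀
      exact ⟨_, ⟨u j₀, S.u_mem_redSet (by omega)⟩, hadj.reachable,
        Or.inr ⟨j₀, hj₀, hj₀i, rfl, rfl⟩⟩
  · obtain ⟨t, htK⟩ := t
    obtain ⟨t', htK'⟩ := t'
    rcases hρ with ⟨ht, hb⟩ | ⟨j, hj, -, ht, hb⟩ <;>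
      rcases hρ' with ⟨ht', hb'⟩ | ⟨j', hj', -, ht', hb'⟩
    · obtain ⟨b, hbI⟩ := b
      obtain ⟨b', hbI'⟩ := b'
      dsimp only at ht ht' hb hb'
      subst hb hb'
      obtain ⟨_, hr⟩ := S.reachable_induce_offCycleRed h ht
      exact hr.map (induceHomOfLE (G := G) hR).toHom
    · exact absurd h (S.not_reachable_offCycleRed_u (hb ▸ ht) (by omega) hb')
    · exact absurd h.symm (S.not_reachable_offCycleRed_u (hb' ▸ ht') (by omega) hb)
    · obtain rfl := S.eq_of_reachable_u_u hj hj' hb hb' h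
      dsimp only at ht ht'
      subst ht ht'
      exact .rfl
  · rintro t b (⟨ht, hb⟩ | ⟨j, hj, hji, -, hb⟩) h
    · exact S.not_reachable_offCycleRed_u (hb ▸ ht) (by omega) rfl h
    · exact hji (S.eq_of_reachable_u_u hj hi hb rfl h)

end Swap

lemma exists_end_adj_v_ne {i : ℕ} (hi : i < blackCount k p2) :
    ∃ l₀ j₀, (l₀ = 0 ∨ l₀ = k - 1) ∧ j₀ < blackCount k p2 ∧ j₀ ≠ i ∧ G.Adj (u l₀) (v j₀) := by
  have hk := S.three_le
  have hbc := pred_le_blackCount k p2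
  rcases Nat.eq_zero_or_pos i with rfl | hi0
  · refine ⟨k - 1, k - 2, Or.inr rfl, by omega, by omega, ?_⟩
    simpa [show k - 2 + 1 = k - 1 by omega] using
      (S.adj_v_u_succ (i := k - 2) (by omega) (by omega)).symm
  · exact ⟨0, 0, Or.inl rfl, by omega, by omega, S.adj_u_v (by omega)⟩

/-- Swap every `v j` into the first class against the `u`s (dropping `u l₀`, one end of the red
`P2`, if there is one) and `y` against `v i` in the second: Condition (I) survives, yet the red
components decrease, contradicting Condition (II). -/
lemma false_of_adj_adj_v {x y : V} (hx : x ∈ offCycleRed I1 I2 k u v p2) (hy : y ∈ I2)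
    (hxy : G.Adj x y) {i : ℕ} (hi : i < blackCount k p2) (hyv : G.Adj y (v i)) : False := by
  classical
  have hk := S.three_le
  obtain ⟨l₀, j₀, hl₀, hj₀, hj₀i, hadj₀⟩ := S.exists_end_adj_v_ne hi
  have hcondI : CondI G (swapFst I1 k u v p2 l₀) (insert (v i) (I2.erase y)) :=
    fun J1 J2 hd h1 h2 => by
      rw [S.card_swapFst (by omega), S.card_insert_v_erase hi hy]
      exact S.condI J1 J2 hd h1 h2
  have hle := S.condII _ _ (S.disjoint_swapFst_insert_v_erase hi y) (S.indep_swapFst hl₀)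
    (S.indep_insert_v_erase hi hy hyv) hcondI
  exact hle.not_gt (S.numRedComp_swap_lt hx hxy hi hj₀ hj₀i hadj₀)

lemma mem_cycleVerts_of_edist_le_one {x z : V} (hx : x ∈ redSet I1 I2)
    (hz : z ∈ cycleVerts k u v p2) (hxz : G.edist x z ≤ 1) : x ∈ cycleVerts k u v p2 := by
  have hbk := blackCount_le k p2
  obtain ⟨j, hj, hzj⟩ : ∃ j < k, G.edist z (u j) ≤ 1 := by
    rcases hz with ⟨j, hj, rfl⟩ | ⟨j, hj, rfl⟩
    · exact ⟨j, hj, by simp⟩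
    · exact ⟨j, by omega, (edist_eq_one_iff_adj.mpr (S.adj_u_v hj).symm).le⟩
  have hd : G.edist x (u j) ≤ 2 :=
    SimpleGraph.edist_triangle.trans ((add_le_add hxz hzj).trans_eq one_add_one_eq_two)
  obtain ⟨l, hl, rfl⟩ := S.exists_eq_u_of_edist_le_two hx hj hd
  exact Or.inl ⟨l, hl, rfl⟩

lemma mem_snd_of_adj {x z : V} (hx : x ∉ cycleVerts k u v p2) (hz : z ∈ cycleVerts k u v p2)
    (hxz : G.Adj x z) : x ∈ I2 := by
  by_contra hx2
  by_cases hx1 : x ∈ I1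
  · rcases hz with ⟨l, hl, rfl⟩ | ⟨l, hl, rfl⟩
    · obtain ⟨l', hl', rfl⟩ := S.exists_eq_v_of_adj_u_of_mem_fst hl hxz.symm hx1
      exact hx (Or.inr ⟨l', hl', rfl⟩)
    · exact S.indep_fst x hx1 _ (S.black_mem_fst l hl) hxz
  · exact hx (S.mem_cycleVerts_of_edist_le_one ⟨hx1, hx2⟩ hz (edist_eq_one_iff_adj.mpr hxz).le)

lemma mem_fst_of_adj_adj {x w z : V} (hx : x ∉ cycleVerts k u v p2)
    (hw : w ∉ cycleVerts k u v p2) (hz : z ∈ cycleVerts k u v p2) (hxw : G.Adj x w)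
    (hwz : G.Adj w z) : x ∈ I1 := by
  have hw2 := S.mem_snd_of_adj hw hz hwz
  by_contra hx1
  have hx2 : x ∉ I2 := fun h => S.indep_snd x h w hw2 hxw
  rcases hz with ⟨l, hl, rfl⟩ | ⟨i, hi, rfl⟩
  · have hd : G.edist x (u l) ≤ 2 := by
      simpa using (Walk.cons hxw (Walk.cons hwz Walk.nil)).edist_le
    obtain ⟨l', hl', rfl⟩ := S.exists_eq_u_of_edist_le_two ⟨hx1, hx2⟩ hl hd
    exact hx (Or.inl ⟨l', hl', rfl⟩)
  · exact S.false_of_adj_adj_v ⟨⟨hx1, hx2⟩, hx⟩ hw2 hxw hi hwz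

end CycleConfig

theorem vertices_near_cycle_general
    {V : Type*} [Fintype V] [DecidableEq V] (G : SimpleGraph V) [DecidableRel G.Adj]
    (hcubic : ∀ v : V, G.degree v = 3)
    (I1 I2 : Finset V) (hdisj : Disjoint I1 I2)
    (hI1 : FinsetIndep G I1) (hI2 : FinsetIndep G I2)
    (hmax : CondI G I1 I2) (hmin : CondII G I1 I2)
    (k : ℕ) (u v : ℕ → V) (p2 : Bool)
    (hcyc : CycleSetup G I1 I2 k u v p2)
    (hblack : ∀ i < blackCount k p2, v i ∈ I1)
    (x : V) (hx : x ∉ cycleVerts k u v p2) :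
    ((⨅ y ∈ cycleVerts k u v p2, G.edist x y) ≤ 2 → x ∈ I1 ∪ I2) ∧
    ((⨅ y ∈ cycleVerts k u v p2, G.edist x y) = 1 → x ∈ I2) ∧
    ((⨅ y ∈ cycleVerts k u v p2, G.edist x y) = 2 → x ∈ I1) := by
  have S : CycleConfig G I1 I2 k u v p2 := ⟨hcubic, hdisj, hI1, hI2, hmax, hmin, hcyc, hblack⟩
  set d := ⨅ y ∈ cycleVerts k u v p2, G.edist x y
  have hne (z : V) (hz : z ∈ cycleVerts k u v p2) : x ≠ z := fun h => hx (h ▸ hz)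
  have near (h : d ≤ 1) : x ∈ I2 := by
    obtain ⟨z, hz, hxz⟩ := ENat.exists_le_of_biInf_le (n := 1) h
    exact S.mem_snd_of_adj hx hz ((edist_le_one_iff_adj_or_eq.mp hxz).resolve_right (hne z hz))
  have far (h : d ≤ 2) (h' : ¬ d ≤ 1) : x ∈ I1 := by
    obtain ⟨z, hz, hxz⟩ := ENat.exists_le_of_biInf_le (n := 2) h
    have hnadj (w : V) (hw : w ∈ cycleVerts k u v p2) : ¬ G.Adj x w := fun hxw =>
      h' ((iInf₂_le w hw).trans (edist_eq_one_iff_adj.mpr hxw).le)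
    obtain ⟨w, hxw, hwz⟩ := exists_adj_adj_of_edist_le_two hxz (hne z hz) (hnadj z hz)
    exact S.mem_fst_of_adj_adj hx (fun hw => hnadj w hw hxw) hz hxw hwz
  refine ⟨fun h => ?_, fun h => near h.le, fun h => far h.le (by rw [h]; decide)⟩
  by_cases h' : d ≤ 1
  · exact Finset.mem_union_right _ (near h')
  · exact Finset.mem_union_left _ (far h h')

/-- Under Conditions (I) and (II) and the cycle setup with all black vertices of
`C'` in `I1`: a vertex `x` off `C'` with `d(x, C') ≤ 2` is black; more precisely
`d(x,C') = 1` forces `x ∈ I2` and `d(x,C') = 2` forces `x ∈ I1`. -/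
theorem vertices_near_cycle
    {V : Type*} [Fintype V] [DecidableEq V] (G : SimpleGraph V) [DecidableRel G.Adj]
    (hconn : G.Connected) (hcubic : ∀ v : V, G.degree v = 3)
    (I1 I2 : Finset V) (hdisj : Disjoint I1 I2)
    (hI1 : FinsetIndep G I1) (hI2 : FinsetIndep G I2)
    (hmax : CondI G I1 I2) (hmin : CondII G I1 I2)
    (k : ℕ) (u v : ℕ → V) (p2 : Bool)
    (hcyc : CycleSetup G I1 I2 k u v p2)
    (hblack : ∀ i < blackCount k p2, v i ∈ I1)
    (x : V) (hx : x ∉ cycleVerts k u v p2) :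
    ((⨅ y ∈ cycleVerts k u v p2, G.edist x y) ≤ 2 → x ∈ I1 ∪ I2) ∧
    ((⨅ y ∈ cycleVerts k u v p2, G.edist x y) = 1 → x ∈ I2) ∧
    ((⨅ y ∈ cycleVerts k u v p2, G.edist x y) = 2 → x ∈ I1) :=
  vertices_near_cycle_general G hcubic I1 I2 hdisj hI1 hI2 hmax hmin k u v p2 hcyc hblack x hx
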